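/- arXiv:1804.08554 — 5 statements merged into one kernel-verified Lean document; each statement's English description precedes it below -/
import Mathlib

section
/- For vectors r_1, ..., r_n in R^m with β := (1/2)·max_{a,b} ‖r_a − r_b‖_∞, a vector r ∈ ℝ^m satisfies max_j ‖r − r_j‖_∞ ≤ β if and only if for every coordinate l, v_l − β ≤ r_l ≤ u_l + β, where u_l = min_j (r_j)_l and v_l = max_j (r_j)_l. -/
/-- A vector achieves error `β` w.r.t. all `r j` iff it lies in the box
`[v l - β, u l + β]` coordinatewise. -/
theorem stmt_1 (m n : ℕ) (r : Fin (n + 1) → Fin m → ℝ)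
    (β : ℝ)
    (hβ : β = (1 / 2) * (Finset.univ : Finset ((Fin (n + 1)) × (Fin (n + 1)))).sup'
      Finset.univ_nonempty (fun p => ‖r p.1 - r p.2‖))
    (u v : Fin m → ℝ)
    (hu : ∀ l, u l = Finset.univ.inf' Finset.univ_nonempty (fun j => r j l))
    (hv : ∀ l, v l = Finset.univ.sup' Finset.univ_nonempty (fun j => r j l))
    (x : Fin m → ℝ) :
    (Finset.univ.sup' Finset.univ_nonempty (fun j => ‖x - r j‖) ≤ β) ↔
      (∀ l, v l - β ≤ x l ∧ x l ≤ u l + β) := by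
  have hβ0 : 0 ≤ β := by
    have h1 : ‖r 0 - r 0‖ ≤ (Finset.univ : Finset ((Fin (n + 1)) × (Fin (n + 1)))).sup'
        Finset.univ_nonempty (fun p => ‖r p.1 - r p.2‖) :=
      Finset.le_sup' (fun p => ‖r p.1 - r p.2‖) (Finset.mem_univ ((0 : Fin (n+1)), (0 : Fin (n+1))))
    have h2 : (0:ℝ) ≤ ‖r 0 - r 0‖ := norm_nonneg _
    rw [hβ]; linarith
  have key : (Finset.univ.sup' Finset.univ_nonempty (fun j => ‖x - r j‖) ≤ β) ↔
      ∀ (j : Fin (n+1)) (l : Fin m), -β ≤ x l - r j l ∧ x l - r j l ≤ β := by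
    rw [Finset.sup'_le_iff]
    constructor
    · intro h j l
      have := (pi_norm_le_iff_of_nonneg hβ0).mp (h j (Finset.mem_univ j)) l
      rw [Pi.sub_apply, Real.norm_eq_abs] at this
      exact abs_le.mp this
    · intro h j _
      rw [pi_norm_le_iff_of_nonneg hβ0]
      intro l
      rw [Pi.sub_apply, Real.norm_eq_abs]
      exact abs_le.mpr (h j l)
  rw [key]
  constructor
  · intro h l
    constructor
    · rw [hv, sub_le_iff_le_add, Finset.sup'_le_iff]
      intro j _
      have := (h j l).1
      linarith
    · rw [hu, ← sub_le_iff_le_add, Finset.le_inf'_iff]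
      intro j _
      have := (h j l).2
      linarith
  · intro h j l
    have h1 := (h l).1
    have h2 := (h l).2
    rw [hv] at h1
    rw [hu] at h2
    have hv' : r j l ≤ Finset.univ.sup' Finset.univ_nonempty (fun j => r j l) :=
      Finset.le_sup' (fun j => r j l) (Finset.mem_univ j)
    have hu' : Finset.univ.inf' Finset.univ_nonempty (fun j => r j l) ≤ r j l :=
      Finset.inf'_le (fun j => r j l) (Finset.mem_univ j)
    constructor <;> linarith
end

section
/- Let T be the set of stochastic vectors x in ℝ^m with t_k ≤ x_k ≤ w_k for all k, where t ≤ w componentwise. Then T has exactly one element if and only if at least one of the following holds: (1) Σ_k t_k = 1; (2) Σ_k w_k = 1; (3) Σ_k t_k < 1 < Σ_k w_k and exactly one index i satisfies t_i < w_i. -/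
/-- A stochastic vector in `ℝ^m`: nonnegative entries summing to 1. -/
def IsStoch {m : ℕ} (x : Fin m → ℝ) : Prop := (∀ i, 0 ≤ x i) ∧ ∑ i, x i = 1

/-!
The transition set lies in the box `∏ [t_k, w_k]`, so it is nonempty exactly when
`Σ t ≤ 1 ≤ Σ w`. If `Σ t = 1` (resp. `Σ w = 1`) it is `{t}` (resp. `{w}`). Otherwise
`t + λ (w - t)` with `λ = (1 - Σ t) / (Σ w - Σ t) ∈ (0, 1)` lies in it and is strictly
inside every nondegenerate interval `[t_k, w_k]`: with two such coordinates, mass can be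
shifted from one to the other, while with only one, all other coordinates are pinned
and the constraint `Σ x = 1` fixes the last one.
-/

open Finset

/-- The transition set without the nonnegativity constraint, which `0 ≤ t` makes redundant. -/
def transitionSet {ι : Type*} [Fintype ι] (t w : ι → ℝ) : Set (ι → ℝ) :=
  {x | ∑ k, x k = 1 ∧ ∀ k, t k ≤ x k ∧ x k ≤ w k}

namespace transitionSet

variable {ι : Type*} [Fintype ι] {t w x : ι → ℝ}

lemma sum_lower_le_one (hx : x ∈ transitionSet t w) : ∑ k, t k ≤ 1 :=
  hx.1 ▸ sum_le_sum fun k _ => (hx.2 k).1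

lemma one_le_sum_upper (hx : x ∈ transitionSet t w) : 1 ≤ ∑ k, w k :=
  hx.1 ▸ sum_le_sum fun k _ => (hx.2 k).2

lemma eq_singleton_lower (htw : ∀ k, t k ≤ w k) (ht : ∑ k, t k = 1) :
    transitionSet t w = {t} := by
  refine Set.eq_singleton_iff_unique_mem.2 ⟨⟨ht, fun k => ⟨le_rfl, htw k⟩⟩, ?_⟩
  rintro y ⟨hy, hyb⟩
  funext k
  exact ((sum_eq_sum_iff_of_le fun k _ => (hyb k).1).1 (ht.trans hy.symm) k (mem_univ k)).symm

lemma eq_singleton_upper (htw : ∀ k, t k ≤ w k) (hw : ∑ k, w k = 1) :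
    transitionSet t w = {w} := by
  refine Set.eq_singleton_iff_unique_mem.2 ⟨⟨hw, fun k => ⟨htw k, le_rfl⟩⟩, ?_⟩
  rintro y ⟨hy, hyb⟩
  funext k
  exact (sum_eq_sum_iff_of_le fun k _ => (hyb k).2).1 (hy.trans hw.symm) k (mem_univ k)

lemma exists_mem_strictly_between (htw : ∀ k, t k ≤ w k) (ht : ∑ k, t k < 1) (hw : 1 < ∑ k, w k) :
    ∃ y ∈ transitionSet t w, ∀ k, t k < w k → t k < y k ∧ y k < w k := by
  set c := (1 - ∑ k, t k) / (∑ k, w k - ∑ k, t k)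
  have hc0 : 0 < c := div_pos (by linarith) (by linarith)
  have hc1 : c < 1 := (div_lt_one (by linarith)).2 (by linarith)
  refine ⟨fun k => t k + c * (w k - t k), ⟨?_, fun k => ?_⟩, fun k hk => ?_⟩
  · have hc : c * (∑ k, w k - ∑ k, t k) = 1 - ∑ k, t k := div_mul_cancel₀ _ (by linarith)
    rw [sum_add_distrib, ← mul_sum, sum_sub_distrib]
    linarith
  · have := htw k
    constructor <;> nlinarith
  · constructor <;> nlinarith

lemma not_subsingleton_of_two_free (htw : ∀ k, t k ≤ w k) (ht : ∑ k, t k < 1)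
    (hw : 1 < ∑ k, w k) {i j : ι} (hij : i ≠ j) (hi : t i < w i) (hj : t j < w j) :
    ¬ (transitionSet t w).Subsingleton := by
  classical
  obtain ⟨y, hy, hstrict⟩ := exists_mem_strictly_between htw ht hw
  obtain ⟨hyi_low, hyi_up⟩ := hstrict i hi
  obtain ⟨hyj_low, hyj_up⟩ := hstrict j hj
  set e := min (w i - y i) (y j - t j)
  have he0 : 0 < e := lt_min (by linarith) (by linarith)
  set z : ι → ℝ := y + e • (Pi.single i 1 - Pi.single j 1)
  have hzi : z i = y i + e := by simp [z, hij]
  have hzj : z j = y j - e := by simp [z, hij.symm, sub_eq_add_neg]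
  have hz : z ∈ transitionSet t w := by
    refine ⟨by simp [z, sum_add_distrib, ← mul_sum, sum_sub_distrib, hy.1], fun k => ?_⟩
    have he_i : e ≤ w i - y i := min_le_left _ _
    have he_j : e ≤ y j - t j := min_le_right _ _
    by_cases hki : k = i
    · subst hki
      constructor <;> linarith
    by_cases hkj : k = j
    · subst hkj
      constructor <;> linarith
    simpa [z, hki, hkj] using hy.2 k
  intro hs
  linarith [congrFun (hs hz hy) i]

lemma subsingleton_of_forall_ne_eq {i : ι} (hfix : ∀ k ≠ i, t k = w k) :
    (transitionSet t w).Subsingleton := by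
  classical
  rintro x ⟨hx, hxb⟩ y ⟨hy, hyb⟩
  have hoff : ∀ k ≠ i, x k = y k := fun k hk => by
    have := hfix k hk
    linarith [hxb k, hyb k]
  have hi : x i = y i := by
    rw [Fintype.sum_eq_add_sum_compl i] at hx hy
    rw [sum_congr rfl fun k hk => hoff k (by simpa using hk)] at hx
    linarith
  funext k
  by_cases hk : k = i
  · exact hk ▸ hi
  · exact hoff k hk

theorem existsUnique_mem_iff (htw : ∀ k, t k ≤ w k) :
    (∃! x, x ∈ transitionSet t w) ↔ ((∑ k, t k = 1) ∨ (∑ k, w k = 1) ∨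
      (∑ k, t k < 1 ∧ 1 < ∑ k, w k ∧ ∃! i, t i < w i)) := by
  constructor
  · rintro ⟨x, hx, huniq⟩
    rcases (sum_lower_le_one hx).eq_or_lt with ht | ht
    · exact .inl ht
    rcases (one_le_sum_upper hx).eq_or_lt with hw | hw
    · exact .inr (.inl hw.symm)
    obtain ⟨i, -, hi⟩ := exists_lt_of_sum_lt (ht.trans hw)
    refine .inr (.inr ⟨ht, hw, i, hi, fun j hj => ?_⟩)
    by_contra hji
    exact not_subsingleton_of_two_free htw ht hw hji hj hi
      fun a ha b hb => (huniq a ha).trans (huniq b hb).symm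
  · rintro (ht | hw | ⟨ht, hw, i, hi, hiu⟩)
    · simp [eq_singleton_lower htw ht]
    · simp [eq_singleton_upper htw hw]
    · obtain ⟨y, hy, -⟩ := exists_mem_strictly_between htw ht hw
      have hfix : ∀ k ≠ i, t k = w k := fun k hk =>
        (htw k).antisymm (not_lt.1 fun h => hk (hiu k h))
      exact ⟨y, hy, fun z hz => subsingleton_of_forall_ne_eq hfix hz hy⟩

end transitionSet

lemma isStoch_and_bounds_iff_mem_transitionSet {m : ℕ} {t w x : Fin m → ℝ}
    (ht0 : ∀ k, 0 ≤ t k) :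
    (IsStoch x ∧ ∀ k, t k ≤ x k ∧ x k ≤ w k) ↔ x ∈ transitionSet t w :=
  ⟨fun ⟨⟨_, hx⟩, hb⟩ => ⟨hx, hb⟩, fun ⟨hx, hb⟩ => ⟨⟨fun k => (ht0 k).trans (hb k).1, hx⟩, hb⟩⟩

/-- The transition set `T` is a singleton iff the lower endpoints sum to 1, or
the upper endpoints sum to 1, or `Σt < 1 < Σw` with exactly one free element. -/
theorem stmt_9 (m : ℕ) (t w : Fin m → ℝ)
    (ht0 : ∀ k, 0 ≤ t k) (htw : ∀ k, t k ≤ w k) :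
    (∃! x : Fin m → ℝ, IsStoch x ∧ ∀ k, t k ≤ x k ∧ x k ≤ w k) ↔
      ((∑ k, t k = 1) ∨ (∑ k, w k = 1) ∨
        (∑ k, t k < 1 ∧ 1 < ∑ k, w k ∧ ∃! i : Fin m, t i < w i)) := by
  simp_rw [isStoch_and_bounds_iff_mem_transitionSet ht0]
  exact transitionSet.existsUnique_mem_iff htw
end

section
/- The tight interval construction preserves the set of stochastic vectors: given u ≤ v in ℝ^m with nonnegative u, define ū_i = max(u_i, 1 − Σ_{j≠i} v_j) and v̄_i = min(v_i, 1 − Σ_{j≠i} u_j). Then the set of stochastic vectors x with u ≤ x ≤ v componentwise equals the set of stochastic vectors x with ū ≤ x ≤ v̄ componentwise. -/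
section SumErase

variable {ι M : Type*} [Fintype ι] [DecidableEq ι]
  [AddCommGroup M] [PartialOrder M] [IsOrderedAddMonoid M] {x : ι → M} {c : M}

theorem sub_sum_erase_le_of_sum_eq_of_le {v : ι → M} (hx : ∑ j, x j = c)
    (hv : ∀ j, x j ≤ v j) (i : ι) : c - ∑ j ∈ Finset.univ.erase i, v j ≤ x i := by
  rw [← hx, ← Finset.add_sum_erase _ _ (Finset.mem_univ i), sub_le_iff_le_add]
  exact add_le_add_right (Finset.sum_le_sum fun j _ => hv j) (x i)

theorem le_sub_sum_erase_of_sum_eq_of_le {u : ι → M} (hx : ∑ j, x j = c)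
    (hu : ∀ j, u j ≤ x j) (i : ι) : x i ≤ c - ∑ j ∈ Finset.univ.erase i, u j := by
  rw [← hx, ← Finset.add_sum_erase _ _ (Finset.mem_univ i), le_sub_iff_add_le]
  exact add_le_add_right (Finset.sum_le_sum fun j _ => hu j) (x i)

end SumErase

theorem stmt_10_general (m : ℕ) (u v : Fin m → ℝ) :
    {x : Fin m → ℝ | IsStoch x ∧ ∀ i, u i ≤ x i ∧ x i ≤ v i} =
      {x : Fin m → ℝ | IsStoch x ∧ ∀ i,
        max (u i) (1 - ∑ j ∈ Finset.univ.erase i, v j) ≤ x i ∧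
        x i ≤ min (v i) (1 - ∑ j ∈ Finset.univ.erase i, u j)} := by
  ext x
  simp only [Set.mem_ofPred_eq, max_le_iff, le_min_iff]
  constructor
  · rintro ⟨hx, hbox⟩
    exact ⟨hx, fun i =>
      ⟨⟨(hbox i).1, sub_sum_erase_le_of_sum_eq_of_le hx.2 (fun j => (hbox j).2) i⟩,
        ⟨(hbox i).2, le_sub_sum_erase_of_sum_eq_of_le hx.2 (fun j => (hbox j).1) i⟩⟩⟩
  · rintro ⟨hx, htight⟩
    exact ⟨hx, fun i => ⟨(htight i).1.1, (htight i).2.1⟩⟩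

/-- The Tight Interval Algorithm preserves the set of stochastic vectors. -/
theorem stmt_10 (m : ℕ) (u v : Fin m → ℝ)
    (hu0 : ∀ i, 0 ≤ u i) (huv : ∀ i, u i ≤ v i) :
    {x : Fin m → ℝ | IsStoch x ∧ ∀ i, u i ≤ x i ∧ x i ≤ v i} =
      {x : Fin m → ℝ | IsStoch x ∧ ∀ i,
        max (u i) (1 - ∑ j ∈ Finset.univ.erase i, v j) ≤ x i ∧
        x i ≤ min (v i) (1 - ∑ j ∈ Finset.univ.erase i, u j)} :=
  stmt_10_general m u v
end

section
/- If [u,v] is a tight interval of stochastic vectors in ℝ^m (i.e., each endpoint is attained: for each i there exist x, y in the set with x_i = u_i and y_i = v_i), then a stochastic vector x with u ≤ x ≤ v is an extreme point of the set {x stochastic : u ≤ x ≤ v} if and only if there is at most one index i with u_i < x_i < v_i. -/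
open Set Finset

def IsFree {ι : Type*} (u v x : ι → ℝ) (i : ι) : Prop := u i < x i ∧ x i < v i

def stochInterval {m : ℕ} (u v : Fin m → ℝ) : Set (Fin m → ℝ) :=
  {x | IsStoch x ∧ ∀ i, u i ≤ x i ∧ x i ≤ v i}

theorem eq_of_mem_openSegment_of_mem_Icc_sdiff_Ioo {a b p q r : ℝ} (hp : p ∈ Icc a b)
    (hq : q ∈ Icc a b) (hr : r ∈ Icc a b \ Ioo a b) (h : r ∈ openSegment ℝ p q) : p = r := by
  have hab : a ≤ b := hr.1.1.trans hr.1.2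
  rw [Icc_sdiff_Ioo_same hab, ← extremePoints_Icc hab] at hr
  exact hr.2 hp hq h

theorem apply_eq_of_sum_eq_of_forall_ne {ι M : Type*} [Fintype ι] [AddCommGroup M]
    {x y : ι → M} {k : ι} (hsum : ∑ i, y i = ∑ i, x i) (hne : ∀ j, j ≠ k → y j = x j) :
    y k = x k := by
  have h := Fintype.sum_eq_single (f := y - x) k fun j hj => sub_eq_zero.2 (hne j hj)
  simp only [Pi.sub_apply, sum_sub_distrib, hsum, sub_self] at h
  exact sub_eq_zero.1 h.symm

theorem exists_pos_add_mem_Icc {a b r : ℝ} (h : r ∈ Ioo a b) :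
    ∃ ε > 0, ∀ t, |t| ≤ ε → r + t ∈ Icc a b := by
  refine ⟨min (r - a) (b - r), lt_min (sub_pos.2 h.1) (sub_pos.2 h.2), fun t ht => ?_⟩
  have := abs_le.1 ht
  constructor <;> linarith [min_le_left (r - a) (b - r), min_le_right (r - a) (b - r)]

section StochInterval

variable {m : ℕ} {u v x : Fin m → ℝ}

theorem add_smul_single_sub_single_mem_stochInterval (hu0 : ∀ i, 0 ≤ u i)
    (hx : x ∈ stochInterval u v) {i j : Fin m} (hij : i ≠ j) {t : ℝ}
    (hi : x i + t ∈ Icc (u i) (v i)) (hj : x j - t ∈ Icc (u j) (v j)) :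
    x + t • (Pi.single i 1 - Pi.single j 1 : Fin m → ℝ) ∈ stochInterval u v := by
  set y := x + t • (Pi.single i 1 - Pi.single j 1 : Fin m → ℝ)
  have hbox : ∀ k, u k ≤ y k ∧ y k ≤ v k := by
    intro k
    rcases eq_or_ne k i with rfl | hki
    · simpa [y, hij] using hi
    rcases eq_or_ne k j with rfl | hkj
    · simpa [y, hki, sub_eq_add_neg] using hj
    · simpa [y, hki, hkj] using hx.2 k
  refine ⟨⟨fun k => (hu0 k).trans (hbox k).1, ?_⟩, hbox⟩
  simp [y, sum_add_distrib, ← mul_sum, hx.1.2]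

theorem mem_extremePoints_stochInterval (hx : x ∈ stochInterval u v)
    (hfree : ∀ i j, IsFree u v x i → IsFree u v x j → i = j) :
    x ∈ (stochInterval u v).extremePoints ℝ := by
  refine ⟨hx, fun y hy z hz hxyz => funext fun k => ?_⟩
  have hfrozen : ∀ k, ¬ IsFree u v x k → y k = x k := fun k hk =>
    eq_of_mem_openSegment_of_mem_Icc_sdiff_Ioo (hy.2 k) (hz.2 k) ⟨hx.2 k, hk⟩
      (Pi.openSegment_subset (s := univ) y z hxyz k (mem_univ k))
  by_cases hk : IsFree u v x k
  · exact apply_eq_of_sum_eq_of_forall_ne (hy.1.2.trans hx.1.2.symm) fun j hj =>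
      hfrozen j fun hj_free => hj (hfree j k hj_free hk)
  · exact hfrozen k hk

theorem eq_of_isFree_of_mem_extremePoints (hu0 : ∀ i, 0 ≤ u i)
    (hx : x ∈ (stochInterval u v).extremePoints ℝ) {i j : Fin m}
    (hi : IsFree u v x i) (hj : IsFree u v x j) : i = j := by
  by_contra hij
  obtain ⟨εi, hεi, hi_room⟩ := exists_pos_add_mem_Icc hi
  obtain ⟨εj, hεj, hj_room⟩ := exists_pos_add_mem_Icc hj
  set ε := min εi εj
  set w : Fin m → ℝ := Pi.single i 1 - Pi.single j 1
  have hmem : ∀ t, |t| ≤ ε → x + t • w ∈ stochInterval u v := fun t ht =>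
    add_smul_single_sub_single_mem_stochInterval hu0 hx.1 hij
      (hi_room t (ht.trans (min_le_left _ _)))
      (by simpa [sub_eq_add_neg] using
        hj_room (-t) (by rw [abs_neg]; exact ht.trans (min_le_right _ _)))
  have hε : 0 < ε := lt_min hεi hεj
  have hminus : x - ε • w ∈ stochInterval u v := by
    simpa [sub_eq_add_neg] using hmem (-ε) (by rw [abs_neg, abs_of_pos hε])
  have hplus : x + ε • w ∈ stochInterval u v := hmem ε (abs_of_pos hε).le
  have hfixed := congrFun (hx.2 hminus hplus (mem_openSegment_sub_add x (ε • w))) i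
  exact hε.ne' (by simpa [w, hij] using hfixed)

end StochInterval

theorem stmt_11_general (m : ℕ) (u v : Fin m → ℝ)
    (hu0 : ∀ i, 0 ≤ u i)
    (T : Set (Fin m → ℝ))
    (hT : T = {x : Fin m → ℝ | IsStoch x ∧ ∀ i, u i ≤ x i ∧ x i ≤ v i})
    (x : Fin m → ℝ) (hx : x ∈ T) :
    x ∈ T.extremePoints ℝ ↔
      ∀ i j : Fin m, (u i < x i ∧ x i < v i) → (u j < x j ∧ x j < v j) → i = j := by
  subst hT
  exact ⟨fun hext _ _ => eq_of_isFree_of_mem_extremePoints hu0 hext,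
    mem_extremePoints_stochInterval hx⟩

/-- For a tight interval of stochastic vectors, a member is an extreme point of
the polytope iff it has at most one free element. -/
theorem stmt_11 (m : ℕ) (u v : Fin m → ℝ)
    (hu0 : ∀ i, 0 ≤ u i) (huv : ∀ i, u i ≤ v i)
    (T : Set (Fin m → ℝ))
    (hT : T = {x : Fin m → ℝ | IsStoch x ∧ ∀ i, u i ≤ x i ∧ x i ≤ v i})
    (htight : ∀ i, (∃ x ∈ T, x i = u i) ∧ (∃ y ∈ T, y i = v i))
    (x : Fin m → ℝ) (hx : x ∈ T) :
    x ∈ T.extremePoints ℝ ↔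
      ∀ i j : Fin m, (u i < x i ∧ x i < v i) → (u j < x j ∧ x j < v j) → i = j :=
  stmt_11_general m u v hu0 T hT x hx
end

section
/- Let P and P' be row-stochastic m×m matrices with ‖P(i,·) − P'(i,·)‖_1 ≤ 2ε for every row i, and let p, p' be probability distributions on {1,...,m} with ‖p − p'‖_1 ≤ 2δ. Then ‖pP − p'P'‖_1 ≤ 2(δ + ε − δε) = 2(1 − (1−δ)(1−ε)), giving the one-step error propagation rule for approximate bisimulations. -/
/-- One-step error propagation: if the rows of `P, P'` are `2ε`-close in
`ℓ¹` and the distributions `p, p'` are `2δ`-close in `ℓ¹`, then `pP` and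
`p'P'` are `2(δ + ε - δε)`-close in `ℓ¹`. -/
theorem stmt_15 (m : ℕ) (P P' : Fin m → Fin m → ℝ) (p p' : Fin m → ℝ)
    (ε δ : ℝ) (hε0 : 0 ≤ ε) (hε1 : ε ≤ 1) (hδ0 : 0 ≤ δ) (hδ1 : δ ≤ 1)
    (hP : ∀ i, IsStoch (P i)) (hP' : ∀ i, IsStoch (P' i))
    (hp : IsStoch p) (hp' : IsStoch p')
    (hrows : ∀ i, ∑ j, |P i j - P' i j| ≤ 2 * ε)
    (hdist : ∑ i, |p i - p' i| ≤ 2 * δ) :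
    ∑ j, |(∑ i, p i * P i j) - (∑ i, p' i * P' i j)| ≤ 2 * (δ + ε - δ * ε) := by
  set f : Fin m → ℝ := fun i => min (p i) (p' i) with hf
  have hf0 : ∀ i, 0 ≤ f i := fun i => le_min (hp.1 i) (hp'.1 i)
  have hfp : ∀ i, f i ≤ p i := fun i => min_le_left _ _
  have hfp' : ∀ i, f i ≤ p' i := fun i => min_le_right _ _
  have habs : ∀ i, |p i - p' i| = (p i - f i) + (p' i - f i) := by
    intro i
    rcases le_total (p i) (p' i) with h | h
    · rw [abs_of_nonpos (by linarith)]
      simp only [hf, min_eq_left h]; ring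
    · rw [abs_of_nonneg (by linarith)]
      simp only [hf, min_eq_right h]; ring
  have hsplit : ∑ i, (p i - f i) + ∑ i, (p' i - f i) ≤ 2 * δ := by
    calc ∑ i, (p i - f i) + ∑ i, (p' i - f i)
        = ∑ i, |p i - p' i| := by
          rw [← Finset.sum_add_distrib]
          exact (Finset.sum_congr rfl fun i _ => (habs i).symm)
      _ ≤ 2 * δ := hdist
  have hsumeq : ∑ i, (p i - f i) = ∑ i, (p' i - f i) := by
    have h1 : ∑ i, (p i - f i) = 1 - ∑ i, f i := by
      rw [Finset.sum_sub_distrib, hp.2]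
    have h2 : ∑ i, (p' i - f i) = 1 - ∑ i, f i := by
      rw [Finset.sum_sub_distrib, hp'.2]
    rw [h1, h2]
  have hsf : 1 - δ ≤ ∑ i, f i := by
    have h1 : ∑ i, (p i - f i) = 1 - ∑ i, f i := by
      rw [Finset.sum_sub_distrib, hp.2]
    rw [hsumeq] at hsplit
    rw [hsumeq] at h1
    linarith
  have hsf1 : ∑ i, f i ≤ 1 := by
    have := Finset.sum_le_sum (fun i (_ : i ∈ Finset.univ) => hfp i)
    rw [hp.2] at this; exact this
  have key : ∀ j, |(∑ i, p i * P i j) - (∑ i, p' i * P' i j)| ≤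
      ∑ i, (f i * |P i j - P' i j| + ((p i - f i) * P i j + (p' i - f i) * P' i j)) := by
    intro j
    have heq : (∑ i, p i * P i j) - (∑ i, p' i * P' i j) =
        ∑ i, (f i * (P i j - P' i j) + ((p i - f i) * P i j - (p' i - f i) * P' i j)) := by
      rw [← Finset.sum_sub_distrib]
      exact Finset.sum_congr rfl fun i _ => by ring
    rw [heq]
    refine le_trans (Finset.abs_sum_le_sum_abs _ _) (Finset.sum_le_sum fun i _ => ?_)
    have h1 : |f i * (P i j - P' i j)| = f i * |P i j - P' i j| := by
      rw [abs_mul, abs_of_nonneg (hf0 i)]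
    have h2 : 0 ≤ (p i - f i) * P i j :=
      mul_nonneg (by linarith [hfp i]) ((hP i).1 j)
    have h3 : 0 ≤ (p' i - f i) * P' i j :=
      mul_nonneg (by linarith [hfp' i]) ((hP' i).1 j)
    calc |f i * (P i j - P' i j) + ((p i - f i) * P i j - (p' i - f i) * P' i j)|
        ≤ |f i * (P i j - P' i j)| + |((p i - f i) * P i j - (p' i - f i) * P' i j)| :=
          abs_add_le _ _
      _ ≤ f i * |P i j - P' i j| + ((p i - f i) * P i j + (p' i - f i) * P' i j) := by
          rw [h1]
          have := abs_sub_abs_le_abs_sub ((p i - f i) * P i j) ((p' i - f i) * P' i j)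
          have h4 : |(p i - f i) * P i j - (p' i - f i) * P' i j| ≤
              (p i - f i) * P i j + (p' i - f i) * P' i j := by
            rw [abs_sub_le_iff]
            constructor <;> linarith
          linarith
  have main : ∑ j, |(∑ i, p i * P i j) - (∑ i, p' i * P' i j)| ≤
      ∑ i, (f i * (2 * ε) + ((p i - f i) + (p' i - f i))) := by
    calc ∑ j, |(∑ i, p i * P i j) - (∑ i, p' i * P' i j)|
        ≤ ∑ j, ∑ i, (f i * |P i j - P' i j| + ((p i - f i) * P i j + (p' i - f i) * P' i j)) :=
          Finset.sum_le_sum fun j _ => key j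
      _ = ∑ i, ∑ j, (f i * |P i j - P' i j| + ((p i - f i) * P i j + (p' i - f i) * P' i j)) :=
          Finset.sum_comm
      _ = ∑ i, (f i * (∑ j, |P i j - P' i j|) + ((p i - f i) + (p' i - f i))) := by
          refine Finset.sum_congr rfl fun i _ => ?_
          rw [Finset.sum_add_distrib, Finset.sum_add_distrib, ← Finset.mul_sum,
            ← Finset.mul_sum, ← Finset.mul_sum, (hP i).2, (hP' i).2, mul_one, mul_one]
      _ ≤ ∑ i, (f i * (2 * ε) + ((p i - f i) + (p' i - f i))) :=
          Finset.sum_le_sum fun i _ => by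
            have := mul_le_mul_of_nonneg_left (hrows i) (hf0 i)
            linarith
  have expand : ∑ i, (f i * (2 * ε) + ((p i - f i) + (p' i - f i))) =
      (∑ i, f i) * (2 * ε) + (∑ i, (p i - f i) + ∑ i, (p' i - f i)) := by
    rw [Finset.sum_add_distrib, Finset.sum_add_distrib, ← Finset.sum_mul]
  rw [expand] at main
  rw [hsumeq] at hsplit
  have h1 : ∑ i, (p i - f i) = 1 - ∑ i, f i := by
    rw [Finset.sum_sub_distrib, hp.2]
  rw [hsumeq] at h1
  nlinarith [main, hsf, hsf1]
end
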